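/- arXiv:1005.5278 — 2 statements merged into one kernel-verified Lean document; each statement's English description precedes it below -/
import Mathlib

section
/- Higman's lemma: if (S, ≤) is a well-quasi-order, then the set S* of finite sequences over S, ordered by the subsequence-embedding order (a sequence u embeds into v if there is a strictly increasing map of positions of u into positions of v such that corresponding elements are related by ≤), is also a well-quasi-order. -/
/-- Subsequence-embedding order on finite sequences: `u` embeds into `v` if there
is a strictly increasing map of positions of `u` into positions of `v` such that
corresponding elements are related by `r`. -/
inductive ListEmb {S : Type*} (r : S → S → Prop) : List S → List S → Prop
  | nil (l : List S) : ListEmb r [] l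
  | cons {a b : S} {l₁ l₂ : List S} : r a b → ListEmb r l₁ l₂ → ListEmb r (a :: l₁) (b :: l₂)
  | skip {b : S} {l₁ l₂ : List S} : ListEmb r l₁ l₂ → ListEmb r l₁ (b :: l₂)

theorem listEmb_eq_sublistForall₂ {S : Type*} (r : S → S → Prop) :
    ListEmb r = List.SublistForall₂ r := by
  ext l₁ l₂
  constructor
  · intro h
    induction h with
    | nil => exact .nil
    | cons hab _ ih => exact .cons hab ih
    | skip _ ih => exact .cons_right ih
  · intro h
    induction h with
    | nil => exact .nil _
    | cons hab _ ih => exact .cons hab ih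
    | cons_right _ ih => exact .skip ih

theorem WellQuasiOrdered.sublistForall₂ {S : Type*} {r : S → S → Prop} [IsPreorder S r]
    (h : WellQuasiOrdered r) : WellQuasiOrdered (List.SublistForall₂ r) := by
  rw [← Set.partiallyWellOrderedOn_univ_iff] at h ⊢
  simpa using h.partiallyWellOrderedOn_sublistForall₂ r

/-- Higman's lemma. -/
theorem higman {S : Type*} (r : S → S → Prop)
    (hrefl : Reflexive r) (htrans : Transitive r)
    (hwqo : ∀ f : ℕ → S, ∃ i j, i < j ∧ r (f i) (f j)) :
    Reflexive (ListEmb r) ∧ Transitive (ListEmb r) ∧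
      ∀ f : ℕ → List S, ∃ i j, i < j ∧ ListEmb r (f i) (f j) := by
  have : IsPreorder S r := { refl := hrefl, trans := htrans }
  rw [listEmb_eq_sublistForall₂]
  exact ⟨refl, fun _ _ _ => _root_.trans, WellQuasiOrdered.sublistForall₂ hwqo⟩
end

section
/- Kruskal's Tree Theorem for a finite signature: if S is a finite set of function symbols (each with a fixed arity), then any infinite sequence t_1, t_2, ... of first-order terms built from S contains two terms t_i and t_j with i < j such that t_i is homeomorphically embedded in t_j. -/
/-- First-order terms over a signature `S`: finite rooted trees whose nodes are
labeled by symbols of `S`. -/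
inductive Term (S : Type*) where
  | node (s : S) (ts : List (Term S))

/-- A term is arity-respecting (well-formed) if the number of children of each
node equals the arity of its label. -/
inductive WF {S : Type*} (ar : S → ℕ) : Term S → Prop
  | node {s : S} {ts : List (Term S)} :
      ts.length = ar s → (∀ t ∈ ts, WF ar t) → WF ar (Term.node s ts)

/-- The homeomorphic embedding on terms: `e ⊴ s(f₁,…,fₙ)` whenever `e ⊴ fᵢ` for
some `i` (diving), and `s(e₁,…,eₙ) ⊴ s(f₁,…,fₙ)` whenever `eᵢ ⊴ fᵢ` for all `i`
(coupling, which in particular relates equal constants). -/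
inductive Emb {S : Type*} : Term S → Term S → Prop
  | dive {e : Term S} {s : S} {fs : List (Term S)} {f : Term S} :
      f ∈ fs → Emb e f → Emb e (Term.node s fs)
  | couple {s : S} {es fs : List (Term S)} (h : es.length = fs.length) :
      (∀ i : Fin es.length, Emb (es.get i) (fs.get (Fin.cast h i))) →
      Emb (Term.node s es) (Term.node s fs)

/-!
Nash-Williams' minimal bad sequence argument. If there were a bad sequence of well-formed terms,
there would be one that is minimal in size at every position. The immediate subterms of its terms
then form a partially well-ordered set: a bad sequence of them could be spliced into the minimal
one, giving a bad sequence that is smaller at the splice point. By Higman's lemma the children lists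
are partially well-ordered under sublist embedding, and since there are only finitely many symbols,
two terms `f m`, `f n` with `m < n` share their root symbol and have embeddable children lists.
Equal arities make those lists of equal length, so they couple and `f m ⊴ f n`, a contradiction.
-/

namespace Set

open PartiallyWellOrderedOn

variable {α : Type*} {r : α → α → Prop} {rk : α → ℕ} {s : Set α} {f : ℕ → α}

theorem partiallyWellOrderedOn_below_of_isMinBadSeq (below : α → α → Prop)
    (hs : ∀ {x y}, below x y → y ∈ s → x ∈ s) (hrk : ∀ {x y}, below x y → rk x < rk y)
    (hr : ∀ {x y z}, below y z → r x y → r x z)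
    (hbad : IsBadSeq r s f) (hmin : ∀ n, IsMinBadSeq r rk s n f) :
    {x | ∃ n, below x (f n)}.PartiallyWellOrderedOn r := by
  rw [iff_forall_not_isBadSeq]
  rintro g ⟨hg, hgbad⟩
  choose k hk using hg
  set n₀ := Function.argmin k
  have hk₀ : ∀ n, k n₀ ≤ k n := fun n => Function.argmin_le k n
  set spliced : ℕ → α := fun i => if i < k n₀ then f i else g (n₀ + (i - k n₀))
    with spliced_def
  have spliced_of_ge : ∀ {i}, k n₀ ≤ i → spliced i = g (n₀ + (i - k n₀)) :=
    fun hi => if_neg (not_lt.2 hi)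
  refine hmin (k n₀) spliced (fun m hm => (if_pos hm).symm) ?_
    ⟨fun i => ?_, fun i j hij hrij => ?_⟩
  · simpa [spliced_of_ge le_rfl] using hrk (hk n₀)
  · rcases lt_or_ge i (k n₀) with hi | hi
    · simpa [spliced_def, hi] using hbad.1 i
    · rw [spliced_of_ge hi]
      exact hs (hk _) (hbad.1 _)
  rcases lt_or_ge j (k n₀) with hj | hj
  · simp only [spliced_def, hij.trans hj, hj, if_true] at hrij
    exact hbad.2 i j hij hrij
  rw [spliced_of_ge hj] at hrij
  rcases lt_or_ge i (k n₀) with hi | hi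
  · simp only [spliced_def, hi, if_true] at hrij
    exact hbad.2 i _ (hi.trans_le (hk₀ _)) (hr (hk _) hrij)
  · rw [spliced_of_ge hi] at hrij
    exact hgbad _ _ (by omega) hrij

end Set

namespace Term

variable {S : Type*}

theorem sizeOf_lt_sizeOf_node {t : Term S} {s : S} {ts : List (Term S)} (h : t ∈ ts) :
    sizeOf t < sizeOf (node s ts) := by
  have := List.sizeOf_lt_of_mem h
  simp only [node.sizeOf_spec]
  omega

@[elab_as_elim]
theorem induction_on {P : Term S → Prop} (t : Term S)
    (node : ∀ s ts, (∀ u ∈ ts, P u) → P (node s ts)) : P t :=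
  match t with
  | .node s ts => node s ts fun u _ => induction_on u node
termination_by sizeOf t
decreasing_by exact sizeOf_lt_sizeOf_node (by assumption)

def label : Term S → S
  | .node s _ => s

def children : Term S → List (Term S)
  | .node _ ts => ts

theorem eta (t : Term S) : t = node t.label t.children := by
  cases t; rfl

theorem sizeOf_lt_of_mem_children {u t : Term S} (h : u ∈ t.children) : sizeOf u < sizeOf t := by
  cases t; exact sizeOf_lt_sizeOf_node h

end Term

namespace WF

variable {S : Type*} {ar : S → ℕ} {u t : Term S}

theorem of_mem_children (h : WF ar t) (hu : u ∈ t.children) : WF ar u := by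
  cases h with | node _ hts => exact hts u hu

theorem length_children (h : WF ar t) : t.children.length = ar t.label := by
  cases h with | node hlen _ => exact hlen

end WF

namespace Emb

variable {S : Type*}

theorem refl (t : Term S) : Emb t t := by
  induction t using Term.induction_on with
  | node s ts ih => exact couple rfl fun i => ih _ (ts.get_mem i)

theorem trans {e f g : Term S} (hef : Emb e f) (hfg : Emb f g) : Emb e g := by
  induction g using Term.induction_on generalizing e f with
  | node s gs ih =>
    cases hfg with
    | dive hmem hfg => exact dive hmem (ih _ hmem hef hfg)
    | couple hlen hfg =>
      cases hef with
      | dive hmem hef =>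
        obtain ⟨i, rfl⟩ := List.mem_iff_get.1 hmem
        exact dive (List.get_mem _ _) (ih _ (List.get_mem _ _) hef (hfg i))
      | couple hlen' hef =>
        exact couple (hlen'.trans hlen) fun i =>
          ih _ (List.get_mem _ _) (hef i) (hfg (Fin.cast hlen' i))

instance : IsPreorder (Term S) Emb where
  refl := refl
  trans _ _ _ := trans

theorem of_mem_children {e u t : Term S} (hu : u ∈ t.children) (h : Emb e u) : Emb e t := by
  rw [t.eta]
  exact dive hu h

theorem of_sublistForall₂_children {ar : S → ℕ} {e t : Term S} (he : WF ar e) (ht : WF ar t)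
    (hlabel : e.label = t.label) (h : List.SublistForall₂ Emb e.children t.children) :
    Emb e t := by
  obtain ⟨l, hl, hsub⟩ := List.sublistForall₂_iff.1 h
  have hlen : l.length = t.children.length := by
    rw [← hl.length_eq, he.length_children, ht.length_children, hlabel]
  obtain rfl := hsub.eq_of_length hlen
  obtain ⟨hlen, hget⟩ := List.forall₂_iff_get.1 hl
  rw [e.eta, t.eta, hlabel]
  exact couple hlen fun i => hget i i.2 (hlen ▸ i.2)

end Emb

open Set Set.PartiallyWellOrderedOn in
theorem partiallyWellOrderedOn_setOf_WF {S : Type*} [Finite S] (ar : S → ℕ) :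
    {t : Term S | WF ar t}.PartiallyWellOrderedOn Emb := by
  rw [iff_not_exists_isMinBadSeq sizeOf]
  rintro ⟨f, hbad, hmin⟩
  have hchildren : {u | ∃ n, u ∈ (f n).children}.PartiallyWellOrderedOn Emb :=
    partiallyWellOrderedOn_below_of_isMinBadSeq (fun u t => u ∈ t.children)
      (fun hu ht => ht.of_mem_children hu) Term.sizeOf_lt_of_mem_children Emb.of_mem_children
      hbad hmin
  have hlabels : (univ : Set S).PartiallyWellOrderedOn (· = ·) :=
    finite_univ.partiallyWellOrderedOn
  obtain ⟨m, n, hmn, hlabel, hsub⟩ :=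
    (hlabels.prod (partiallyWellOrderedOn_sublistForall₂ Emb hchildren)).exists_lt
      (f := fun n => ((f n).label, (f n).children))
      fun n => ⟨mem_univ _, fun _ hu => ⟨n, hu⟩⟩
  exact hbad.2 m n hmn (Emb.of_sublistForall₂_children (hbad.1 m) (hbad.1 n) hlabel hsub)

/-- Kruskal's Tree Theorem for a finite signature. -/
theorem kruskal_tree_theorem {S : Type*} [Finite S] (ar : S → ℕ)
    (t : ℕ → Term S) (hwf : ∀ n, WF ar (t n)) :
    ∃ i j, i < j ∧ Emb (t i) (t j) :=
  (partiallyWellOrderedOn_setOf_WF ar).exists_lt hwf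
end
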